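/- arXiv:1711.02301 — 2 statements merged into one kernel-verified Lean document; each statement's English description precedes it below -/
import Mathlib

section
/- Exact game value characterization: in the Attacker-Defender game with initial state S_0, the defender has a winning strategy if and only if φ(S_0) < 1, and the attacker has a winning strategy if and only if φ(S_0) ≥ 1. -/
/-
The potential `φ` is additive over partitions and doubles when all pieces advance (as long as
no piece sits at level `K`). If `φ(S) < 1`, the defender destroys the heavier part, so the
potential never increases and no piece ever reaches level `K`; since pieces advance every round,
the board is empty after at most `K + 1` rounds. If `φ(S) ≥ 1` and no piece is at level `K`, the
pieces have weights `2^(i-K) ≤ 1/2`, and a greedy choice among these powers of two yields a part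
of potential exactly `1/2`; splitting off this part leaves both parts with potential `≥ 1/2`, so
the survivor again has potential `≥ 1` after advancing.
-/

open Finset

/-- Potential of a state `S` (counts of pieces per level) in a game with `K` levels. -/
noncomputable def phi (K : ℕ) (S : ℕ → ℕ) : ℝ :=
  ∑ i ∈ Finset.range (K+1), (S i : ℝ) * (2:ℝ) ^ (-((K:ℤ) - i))

/-- Advance every piece one level. -/
def advance (S : ℕ → ℕ) : ℕ → ℕ := fun i => if i = 0 then 0 else S (i-1)

/-- The attacker can force a win from state `S`: either a piece is already at level `K`,
or the attacker can present a partition `A, B` such that whichever part the defender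
destroys, the attacker wins from the advanced surviving part. -/
inductive AttackerWins (K : ℕ) : (ℕ → ℕ) → Prop where
  | reach (S : ℕ → ℕ) : S K ≠ 0 → AttackerWins K S
  | step (S A B : ℕ → ℕ) : (∀ i, A i + B i = S i) →
      AttackerWins K (advance A) → AttackerWins K (advance B) → AttackerWins K S

/-- The defender can force a win from state `S`: either no pieces remain, or no piece is at
level `K` and for every partition `A, B` the attacker presents, the defender can destroy one
part so that the defender wins from the advanced other part. -/
inductive DefenderWins (K : ℕ) : (ℕ → ℕ) → Prop where
  | empty (S : ℕ → ℕ) : (∀ i, S i = 0) → DefenderWins K S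
  | step (S : ℕ → ℕ) (choice : (ℕ → ℕ) → (ℕ → ℕ) → Bool) : S K = 0 →
      (∀ A B : ℕ → ℕ, (∀ i, A i + B i = S i) →
        DefenderWins K (advance (if choice A B then A else B))) → DefenderWins K S

open Function

-- `phi K S` scaled by `2 ^ K`, so that the game can be analysed in `ℕ`.
def weight (K : ℕ) (S : ℕ → ℕ) : ℕ := ∑ i ∈ range (K + 1), S i * 2 ^ i

theorem phi_eq_weight_div (K : ℕ) (S : ℕ → ℕ) : phi K S = weight K S / 2 ^ K := by
  simp only [phi, weight, Nat.cast_sum, Nat.cast_mul, Nat.cast_pow, Nat.cast_ofNat, sum_div]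
  refine sum_congr rfl fun i _ => ?_
  rw [neg_sub, zpow_sub₀ two_ne_zero, zpow_natCast, zpow_natCast, mul_div_assoc]

theorem phi_lt_one_iff {K : ℕ} {S : ℕ → ℕ} : phi K S < 1 ↔ weight K S < 2 ^ K := by
  rw [phi_eq_weight_div, div_lt_one (by positivity)]
  exact_mod_cast Iff.rfl

theorem weight_succ (L : ℕ) (S : ℕ → ℕ) :
    weight (L + 1) S = weight L S + S (L + 1) * 2 ^ (L + 1) :=
  sum_range_succ _ _

theorem weight_add (K : ℕ) (A B : ℕ → ℕ) : weight K (A + B) = weight K A + weight K B := by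
  simp only [weight, Pi.add_apply, add_mul, sum_add_distrib]

theorem weight_zero (K : ℕ) : weight K 0 = 0 := by
  simp [weight]

theorem two_pow_le_weight {K : ℕ} {S : ℕ → ℕ} (h : S K ≠ 0) : 2 ^ K ≤ weight K S :=
  calc 2 ^ K ≤ S K * 2 ^ K := Nat.le_mul_of_pos_left _ (Nat.pos_of_ne_zero h)
    _ ≤ weight K S := single_le_sum (f := fun i => S i * 2 ^ i) (fun _ _ => Nat.zero_le _)
        (self_mem_range_succ K)

theorem weight_update_of_lt {L j : ℕ} (hj : L < j) (S : ℕ → ℕ) (m : ℕ) :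
    weight L (update S j m) = weight L S :=
  sum_congr rfl fun i hi => by rw [update_of_ne (by simp at hi; omega)]

theorem weight_advance {K : ℕ} {S : ℕ → ℕ} (h : S K = 0) :
    weight K (advance S) = 2 * weight K S := by
  rw [weight, sum_range_succ', weight, sum_range_succ, h, zero_mul, add_zero, mul_sum]
  simp only [advance, if_true, zero_mul, add_zero, Nat.add_one_ne_zero, if_false,
    add_tsub_cancel_right, pow_succ]
  exact sum_congr rfl fun i _ => by ring

-- Greedy from the top level: take as many pieces of level `L` as fit into `T`; what remains of
-- `T` is still divisible by `2 ^ L` and is covered by the lower levels.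
theorem exists_le_weight_eq {L T : ℕ} {c : ℕ → ℕ} (hT : 2 ^ L ∣ T) (hc : T ≤ weight L c) :
    ∃ a ≤ c, weight L a = T := by
  induction L generalizing T with
  | zero =>
    refine ⟨update 0 0 T, fun i => ?_, by simp [weight]⟩
    rcases eq_or_ne i 0 with rfl | hi
    · simpa [weight] using hc
    · simp [hi]
  | succ L ih =>
    set m := min (c (L + 1)) (T / 2 ^ (L + 1)) with hm_def
    have hmT : m * 2 ^ (L + 1) ≤ T :=
      (Nat.mul_le_mul_right _ (min_le_right _ _)).trans (Nat.div_mul_le_self _ _)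
    have hdvd : 2 ^ L ∣ T - m * 2 ^ (L + 1) :=
      Nat.dvd_sub ((pow_dvd_pow 2 L.le_succ).trans hT)
        ((Dvd.intro _ (pow_succ 2 L).symm).mul_left m)
    have hle : T - m * 2 ^ (L + 1) ≤ weight L c := by
      rw [weight_succ] at hc
      rcases min_choice (c (L + 1)) (T / 2 ^ (L + 1)) with hm | hm <;> rw [← hm_def] at hm
      · rw [hm]; omega
      · rw [hm, Nat.div_mul_cancel hT]; omega
    obtain ⟨a, hac, ha⟩ := ih hdvd hle
    refine ⟨update a (L + 1) m, fun i => ?_, ?_⟩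
    · rcases eq_or_ne i (L + 1) with rfl | hi
      · rw [update_self]; exact min_le_left _ _
      · simpa [hi] using hac i
    · rw [weight_succ, weight_update_of_lt L.lt_succ_self, ha, update_self]
      omega

theorem exists_le_two_mul_weight_eq {K : ℕ} {S : ℕ → ℕ} (hK : S K = 0)
    (hS : 2 ^ K ≤ weight K S) : ∃ A ≤ S, 2 * weight K A = 2 ^ K := by
  cases K with
  | zero => simp [weight, hK] at hS
  | succ L =>
    rw [weight_succ, hK, zero_mul, add_zero] at hS
    obtain ⟨A, hAS, hA⟩ :=
      exists_le_weight_eq (dvd_refl _) ((Nat.pow_le_pow_right two_pos L.le_succ).trans hS)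
    have hAK : A (L + 1) = 0 := Nat.eq_zero_of_le_zero (hK ▸ hAS (L + 1))
    exact ⟨A, hAS, by rw [weight_succ, hAK, zero_mul, add_zero, hA, pow_succ, mul_comm]⟩

theorem support_advance_subset {K n : ℕ} {S X : ℕ → ℕ}
    (hS : support S ⊆ Set.Icc (K - (n + 1)) K) (hK : S K = 0) (hXS : X ≤ S) :
    support (advance X) ⊆ Set.Icc (K - n) K := by
  intro i hi
  simp only [mem_support, advance, ne_eq, ite_eq_left_iff, not_forall] at hi
  obtain ⟨hi0, hXi⟩ := hi
  have hSi : S (i - 1) ≠ 0 := fun h => hXi (Nat.eq_zero_of_le_zero (h ▸ hXS (i - 1)))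
  have hSi_mem := hS hSi
  have hi_ne : i - 1 ≠ K := fun h => hSi (h ▸ hK)
  simp only [Set.mem_Icc] at *
  omega

theorem eq_zero_of_support_subset {K : ℕ} {S : ℕ → ℕ} (hS : support S ⊆ Set.Icc K K)
    (hK : S K = 0) : S = 0 := by
  funext i
  by_contra hi
  obtain rfl : i = K := by simpa using hS hi
  exact hi hK

-- Induction on `n`, the number of rounds before every surviving piece has reached level `K`.
theorem defenderWins_of_weight_lt {K : ℕ} :
    ∀ {n : ℕ} {S : ℕ → ℕ}, support S ⊆ Set.Icc (K - n) K → weight K S < 2 ^ K → DefenderWins K S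
  | n, S, hS, hw => by
    have hK : S K = 0 := by_contra fun h => (two_pow_le_weight h).not_gt hw
    cases n with
    | zero => exact .empty S fun i => congrFun (eq_zero_of_support_subset hS hK) i
    | succ n =>
      classical
      have survivor : ∀ X ≤ S, 2 * weight K X ≤ weight K S → DefenderWins K (advance X) := by
        intro X hXS hX
        have hXK : X K = 0 := Nat.eq_zero_of_le_zero (hK ▸ hXS K)
        exact defenderWins_of_weight_lt (support_advance_subset hS hK hXS)
          (by rw [weight_advance hXK]; omega)
      refine .step S (fun A B => decide (weight K A ≤ weight K B)) hK fun A B hAB => ?_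
      have hsplit : weight K A + weight K B = weight K S := by
        rw [← weight_add, show A + B = S from funext hAB]
      by_cases h : weight K A ≤ weight K B
      · simpa [h] using survivor A (fun i => hAB i ▸ Nat.le_add_right _ _) (by omega)
      · simpa [h] using survivor B (fun i => hAB i ▸ Nat.le_add_left _ _) (by omega)

theorem attackerWins_of_le_weight {K : ℕ} :
    ∀ {n : ℕ} {S : ℕ → ℕ}, support S ⊆ Set.Icc (K - n) K → 2 ^ K ≤ weight K S → AttackerWins K S
  | n, S, hS, hw => by
    rcases ne_or_eq (S K) 0 with hK | hK
    · exact .reach S hK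
    cases n with
    | zero => simp [eq_zero_of_support_subset hS hK, weight_zero] at hw
    | succ n =>
      obtain ⟨A, hAS, hA⟩ := exists_le_two_mul_weight_eq hK hw
      have hsplit : weight K A + weight K (S - A) = weight K S := by
        rw [← weight_add, add_tsub_cancel_of_le hAS]
      have survivor : ∀ X ≤ S, 2 ^ K ≤ 2 * weight K X → AttackerWins K (advance X) := by
        intro X hXS hX
        have hXK : X K = 0 := Nat.eq_zero_of_le_zero (hK ▸ hXS K)
        exact attackerWins_of_le_weight (support_advance_subset hS hK hXS)
          (by rw [weight_advance hXK]; omega)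
      exact .step S A (S - A) (fun i => Nat.add_sub_of_le (hAS i)) (survivor A hAS hA.ge)
        (survivor (S - A) tsub_le_self (by omega))

theorem AttackerWins.not_defenderWins {K : ℕ} {S : ℕ → ℕ} (hA : AttackerWins K S) :
    ¬DefenderWins K S := by
  induction hA with
  | reach S hK =>
    rintro (⟨_, h0⟩ | ⟨_, _, hK', _⟩)
    exacts [hK (h0 K), hK hK']
  | step S A B hAB _ _ ihA ihB =>
    rintro (⟨_, h0⟩ | ⟨_, choice, _, h⟩)
    · refine ihA (.empty _ fun i => ?_)
      have := hAB (i - 1)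
      have := h0 (i - 1)
      simp only [advance]
      split_ifs <;> omega
    · have := h A B hAB
      split_ifs at this
      exacts [ihA this, ihB this]

/-- Exact game value: the defender wins iff `φ(S) < 1`, and the attacker wins iff `φ(S) ≥ 1`. -/
theorem stmt10 (K : ℕ) (S : ℕ → ℕ) (hsupp : ∀ i, K < i → S i = 0) :
    (DefenderWins K S ↔ phi K S < 1) ∧ (AttackerWins K S ↔ 1 ≤ phi K S) := by
  have hS : support S ⊆ Set.Icc (K - K) K := fun i hi =>
    ⟨by omega, not_lt.1 fun h => hi (hsupp i h)⟩
  have hD : weight K S < 2 ^ K → DefenderWins K S := defenderWins_of_weight_lt hS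
  have hA : 2 ^ K ≤ weight K S → AttackerWins K S := attackerWins_of_le_weight hS
  rw [← not_lt, phi_lt_one_iff, not_lt]
  exact ⟨⟨fun hd => not_le.1 fun h => (hA h).not_defenderWins hd, hD⟩,
    ⟨fun ha => not_lt.1 fun h => ha.not_defenderWins (hD h), hA⟩⟩
end

section
/- A piece cannot survive more than K rounds under the defender's greedy strategy when φ(S_0) < 1: since the potential of the whole state remains < 1 in every round and each surviving piece's individual potential doubles every round, any piece initially at level l ≥ 0 with weight 2^{-(K-l)} would exceed potential 1 after more than K - l survivals; hence every game from a state with φ(S_0) < 1 under the greedy defender lasts at most K rounds. -/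
open Finset

lemma phi_nonneg (K : ℕ) (S : ℕ → ℕ) : 0 ≤ phi K S :=
  Finset.sum_nonneg fun i _ => mul_nonneg (Nat.cast_nonneg _) (by positivity)

lemma SK_zero (K : ℕ) (S : ℕ → ℕ) (h : phi K S < 1) : S K = 0 := by
  by_contra hne
  have h1 : (1:ℝ) ≤ (S K : ℝ) * (2:ℝ) ^ (-((K:ℤ) - K)) := by
    simp only [sub_self, neg_zero, zpow_zero, mul_one]
    exact_mod_cast Nat.one_le_iff_ne_zero.mpr hne
  have h2 := Finset.single_le_sum (f := fun i => (S i : ℝ) * (2:ℝ) ^ (-((K:ℤ) - i)))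
    (fun i _ => mul_nonneg (Nat.cast_nonneg _) (by positivity))
    (Finset.self_mem_range_succ K)
  have : (1:ℝ) ≤ phi K S := h1.trans h2
  linarith

lemma phi_add (K : ℕ) (A B T : ℕ → ℕ) (h : ∀ i, A i + B i = T i) :
    phi K A + phi K B = phi K T := by
  unfold phi
  rw [← Finset.sum_add_distrib]
  refine Finset.sum_congr rfl fun i _ => ?_
  rw [← add_mul, ← Nat.cast_add, h i]

lemma phi_advance_le (K : ℕ) (A : ℕ → ℕ) : phi K (advance A) ≤ 2 * phi K A := by
  unfold phi advance
  rw [Finset.mul_sum,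
    Finset.sum_range_succ' (fun i => ((if i = 0 then 0 else A (i-1) : ℕ) : ℝ) * (2:ℝ) ^ (-((K:ℤ) - i)))]
  simp only [Nat.add_sub_cancel, Nat.succ_ne_zero, if_false, if_true, Nat.cast_zero, zero_mul,
    add_zero, reduceIte]
  rw [Finset.sum_range_succ (fun i => 2 * ((A i : ℝ) * (2:ℝ) ^ (-((K:ℤ) - i))))]
  have heq : ∀ i ∈ Finset.range K,
      (A i : ℝ) * (2:ℝ) ^ (-((K:ℤ) - (i+1:ℕ))) = 2 * ((A i : ℝ) * (2:ℝ) ^ (-((K:ℤ) - i))) := by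
    intro i _
    have : (-((K:ℤ) - (i+1:ℕ))) = (-((K:ℤ) - i)) + 1 := by push_cast; ring
    rw [this, zpow_add₀ (two_ne_zero), zpow_one]; ring
  rw [Finset.sum_congr rfl heq]
  have : (0:ℝ) ≤ 2 * ((A K : ℝ) * (2:ℝ) ^ (-((K:ℤ) - K))) := by positivity
  linarith

/-- Under the greedy defender and `φ(S₀) < 1`, no piece survives more than `K` rounds:
after `K` rounds the state is empty. `S j` is the state after `j` rounds. -/
theorem stmt15 (K : ℕ) (S₀ : ℕ → ℕ) (hsupp : ∀ i, K < i → S₀ i = 0)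
    (hpot : phi K S₀ < 1) (S : ℕ → (ℕ → ℕ)) (hS0 : S 0 = S₀)
    (hplay : ∀ j, ∃ A B : ℕ → ℕ, (∀ i, A i + B i = S j i) ∧
      ((phi K A ≤ phi K B ∧ S (j+1) = advance A) ∨
       (phi K B ≤ phi K A ∧ S (j+1) = advance B))) :
    ∀ j, K ≤ j → ∀ i, S j i = 0 := by
  have inv : ∀ j, (∀ i, K < i → S j i = 0) ∧ phi K (S j) < 1 := by
    intro j
    induction j with
    | zero => exact ⟨hS0 ▸ hsupp, hS0 ▸ hpot⟩
    | succ j ih =>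
      obtain ⟨hsup, hphi⟩ := ih
      obtain ⟨A, B, hAB, hcase⟩ := hplay j
      have hSK : S j K = 0 := SK_zero K _ hphi
      have hadd := phi_add K A B (S j) hAB
      obtain ⟨C, hC, hCle, hCphi⟩ : ∃ C, S (j+1) = advance C ∧ (∀ i, C i ≤ S j i) ∧
          2 * phi K C ≤ phi K (S j) := by
        rcases hcase with ⟨hle, hadv⟩ | ⟨hle, hadv⟩
        · exact ⟨A, hadv, fun i => (hAB i) ▸ Nat.le_add_right _ _, by linarith⟩
        · exact ⟨B, hadv, fun i => (hAB i) ▸ Nat.le_add_left _ _, by linarith⟩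
      constructor
      · intro i hi
        rw [hC]
        unfold advance
        rw [if_neg (by omega)]
        have hz : S j (i-1) = 0 := by
          rcases Nat.lt_or_ge K (i-1) with h | h
          · exact hsup _ h
          · have : i - 1 = K := by omega
            rw [this]; exact hSK
        have := hCle (i-1)
        omega
      · rw [hC]
        calc phi K (advance C) ≤ 2 * phi K C := phi_advance_le K C
          _ ≤ phi K (S j) := hCphi
          _ < 1 := hphi
  have low : ∀ j, ∀ i, i < j → S j i = 0 := by
    intro j
    induction j with
    | zero => intro i hi; omega
    | succ j ih =>
      intro i hi
      obtain ⟨A, B, hAB, hcase⟩ := hplay j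
      obtain ⟨C, hC, hCle⟩ : ∃ C, S (j+1) = advance C ∧ (∀ i, C i ≤ S j i) := by
        rcases hcase with ⟨_, hadv⟩ | ⟨_, hadv⟩
        · exact ⟨A, hadv, fun i => (hAB i) ▸ Nat.le_add_right _ _⟩
        · exact ⟨B, hadv, fun i => (hAB i) ▸ Nat.le_add_left _ _⟩
      rw [hC]
      unfold advance
      rcases Nat.eq_zero_or_pos i with h0 | h0
      · rw [if_pos h0]
      · rw [if_neg (by omega)]
        have hz : S j (i-1) = 0 := ih _ (by omega)
        have := hCle (i-1)
        omega
  intro j hj i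
  obtain ⟨hsup, hphi⟩ := inv j
  rcases Nat.lt_or_ge i j with h | h
  · exact low j i h
  · rcases Nat.lt_or_ge K i with h' | h'
    · exact hsup i h'
    · have : i = K := by omega
      rw [this]
      exact SK_zero K _ hphi
end
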